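/- arXiv:2003.00852 — 7 statements merged into one kernel-verified Lean document; each statement's English description precedes it below -/
import Mathlib

section
/- Let p, q be integers and m, n positive integers with |p·n − q·m| = 1. Then the Ford circles K[p,m] and K[q,n] are externally tangent: the distance between their centers equals the sum of their radii, i.e. (p/m − q/n)² + (1/(2m²) − 1/(2n²))² = (1/(2m²) + 1/(2n²))². -/
/-- The Ford circle `K[p,m]` has center `(p/m, 1/(2m²))` and radius `1/(2m²)`.
If `|p·n − q·m| = 1`, then `K[p,m]` and `K[q,n]` are externally tangent:
the squared distance between their centers equals the square of the sum of their radii. -/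
theorem ford_circles_tangent (p q m n : ℤ) (hm : 0 < m) (hn : 0 < n)
    (h : |p * n - q * m| = 1) :
    ((p : ℝ) / m - (q : ℝ) / n) ^ 2
        + (1 / (2 * (m : ℝ) ^ 2) - 1 / (2 * (n : ℝ) ^ 2)) ^ 2
      = (1 / (2 * (m : ℝ) ^ 2) + 1 / (2 * (n : ℝ) ^ 2)) ^ 2 := by
  have hm' : (m : ℝ) ≠ 0 := Int.cast_ne_zero.2 hm.ne'
  have hn' : (n : ℝ) ≠ 0 := Int.cast_ne_zero.2 hn.ne'
  have h2 : ((p * n - q * m : ℤ) : ℝ) ^ 2 = 1 := by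
    have := sq_abs (p * n - q * m)
    rw [h] at this
    have : (p * n - q * m) ^ 2 = 1 := by linarith
    exact_mod_cast congrArg (Int.cast : ℤ → ℝ) this
  push_cast at h2
  field_simp
  linear_combination 4 * (m:ℝ) ^ 2 * (n:ℝ) ^ 2 * h2
end

section
/- Let p, q be integers and m, n positive integers with |p·n − q·m| ≥ 2. Then the Ford circles K[p,m] and K[q,n] are disjoint, lying exterior to each other: the distance between their centers is strictly greater than the sum of their radii, i.e. (p/m − q/n)² + (1/(2m²) − 1/(2n²))² > (1/(2m²) + 1/(2n²))². -/
/-- If `|p·n − q·m| ≥ 2`, then the Ford circles `K[p,m]` and `K[q,n]` are disjoint,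
lying exterior to each other: the squared distance between their centers is strictly
greater than the square of the sum of their radii. -/
theorem ford_circles_disjoint (p q m n : ℤ) (hm : 0 < m) (hn : 0 < n)
    (h : 2 ≤ |p * n - q * m|) :
    ((p : ℝ) / m - (q : ℝ) / n) ^ 2
        + (1 / (2 * (m : ℝ) ^ 2) - 1 / (2 * (n : ℝ) ^ 2)) ^ 2
      > (1 / (2 * (m : ℝ) ^ 2) + 1 / (2 * (n : ℝ) ^ 2)) ^ 2 := by
  have hm' : (0:ℝ) < m := by exact_mod_cast hm
  have hn' : (0:ℝ) < n := by exact_mod_cast hn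
  have hsq : (4:ℤ) ≤ (p * n - q * m) ^ 2 := by
    have := sq_abs (p * n - q * m)
    nlinarith [sq_nonneg (|p * n - q * m| - 2)]
  have hsq' : (4:ℝ) ≤ ((p:ℝ) * n - (q:ℝ) * m) ^ 2 := by exact_mod_cast hsq
  rw [gt_iff_lt, ← sub_pos]
  have hexp : ((p : ℝ) / m - (q : ℝ) / n) ^ 2
        + (1 / (2 * (m : ℝ) ^ 2) - 1 / (2 * (n : ℝ) ^ 2)) ^ 2
      - (1 / (2 * (m : ℝ) ^ 2) + 1 / (2 * (n : ℝ) ^ 2)) ^ 2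
      = (((p:ℝ) * n - (q:ℝ) * m) ^ 2 - 1) / (m ^ 2 * n ^ 2) := by
    field_simp
    ring
  rw [hexp]
  apply div_pos (by linarith) (by positivity)
end

section
/- Let p, q be integers and m, n positive integers with |p·n − q·m| = 1. If a point X ∈ ℝ² lies on both Ford circles K[p,m] and K[q,n] (i.e. X is at distance 1/(2m²) from (p/m, 1/(2m²)) and at distance 1/(2n²) from (q/n, 1/(2n²))), then X = ((p·m + q·n)/(m² + n²), 1/(m² + n²)). In other words, the tangency point of the two circles is unique and is given by this symmetric formula. -/
/-- If `|p·n − q·m| = 1` and a point `X ∈ ℝ²` lies on both Ford circles `K[p,m]`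
and `K[q,n]`, then `X = ((p·m + q·n)/(m² + n²), 1/(m² + n²))`: the tangency point
of the two circles is unique and is given by this symmetric formula. -/
theorem ford_tangency_point_unique (p q m n : ℤ) (hm : 0 < m) (hn : 0 < n)
    (h : |p * n - q * m| = 1) (X : EuclideanSpace ℝ (Fin 2))
    (hX₁ : dist X !₂[(p : ℝ) / m, 1 / (2 * (m : ℝ) ^ 2)] = 1 / (2 * (m : ℝ) ^ 2))
    (hX₂ : dist X !₂[(q : ℝ) / n, 1 / (2 * (n : ℝ) ^ 2)] = 1 / (2 * (n : ℝ) ^ 2)) :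
    X = ![((p : ℝ) * m + (q : ℝ) * n) / ((m : ℝ) ^ 2 + (n : ℝ) ^ 2),
          1 / ((m : ℝ) ^ 2 + (n : ℝ) ^ 2)] := by
  obtain ⟨x, y, hxy⟩ : ∃ a b : ℝ, X = !₂[a, b] := ⟨X 0, X 1, by
    ext i; fin_cases i <;> rfl⟩
  subst hxy
  have hM : (0:ℝ) < (m:ℝ) := by exact_mod_cast hm
  have hN : (0:ℝ) < (n:ℝ) := by exact_mod_cast hn
  have hS : (0:ℝ) < (m:ℝ)^2 + (n:ℝ)^2 := by positivity
  set M : ℝ := (m:ℝ) with hMdef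
  set N : ℝ := (n:ℝ) with hNdef
  set P : ℝ := (p:ℝ) with hPdef
  set Q : ℝ := (q:ℝ) with hQdef
  -- turn the distance hypotheses into polynomial equations
  have sq1 : (x - P/M)^2 + (y - 1/(2*M^2))^2 = (1/(2*M^2))^2 := by
    have := congrArg (· ^ 2) hX₁
    rw [EuclideanSpace.dist_eq] at this
    simp only [Fin.sum_univ_two, Real.dist_eq, Matrix.cons_val_zero, Matrix.cons_val_one,
      Matrix.head_cons, PiLp.toLp_apply] at this
    rw [Real.sq_sqrt (by positivity)] at this
    simpa using this
  have sq2 : (x - Q/N)^2 + (y - 1/(2*N^2))^2 = (1/(2*N^2))^2 := by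
    have := congrArg (· ^ 2) hX₂
    rw [EuclideanSpace.dist_eq] at this
    simp only [Fin.sum_univ_two, Real.dist_eq, Matrix.cons_val_zero, Matrix.cons_val_one,
      Matrix.head_cons, PiLp.toLp_apply] at this
    rw [Real.sq_sqrt (by positivity)] at this
    simpa using this
  have hM0 : M ≠ 0 := ne_of_gt hM
  have hN0 : N ≠ 0 := ne_of_gt hN
  have e1 : (M*x - P)^2 + M^2 * y^2 = y := by
    field_simp at sq1
    apply mul_left_cancel₀ (a := 4*M^4) (by positivity)
    ring_nf
    ring_nf at sq1
    linear_combination M^2 * sq1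
  have e2 : (N*x - Q)^2 + N^2 * y^2 = y := by
    field_simp at sq2
    apply mul_left_cancel₀ (a := 4*N^4) (by positivity)
    ring_nf
    ring_nf at sq2
    linear_combination N^2 * sq2
  -- the determinant condition
  have hD : (P*N - Q*M)^2 = 1 := by
    have h2 : (p * n - q * m)^2 = 1 := by
      rw [← sq_abs, h]; norm_num
    rw [hPdef, hNdef, hQdef, hMdef]
    exact_mod_cast h2
  -- key: y is determined
  have hy2 : ((M^2+N^2)*y - 1)^2 = 0 := by
    linear_combination
      (4*M*N*((M*x-P)*(N*x-Q)) + (M*(N*x-Q)-N*(M*x-P))^2 - 1) * hD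
      - (N^4*((M*x-P)^2 + y - M^2*y^2) - 2*M^2*N^2*(N*x-Q)^2 - 2*N^2) * e1
      - (M^4*((N*x-Q)^2 + y - N^2*y^2) - 2*M^2*N^2*(y - M^2*y^2) - 2*M^2) * e2
  have hy' : (M^2+N^2)*y = 1 := by
    have := pow_eq_zero_iff (n := 2) (by norm_num) |>.mp hy2
    linarith [sub_eq_zero.mp this]
  have hu2 : (M*x - P)^2 = N^2 * y^2 := by linear_combination e1 - y * hy'
  have hv2 : (N*x - Q)^2 = M^2 * y^2 := by linear_combination e2 - y * hy'
  have huv : (M*x - P) * (N*x - Q) = -(M*N*y^2) := by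
    apply mul_left_cancel₀ (a := 2*M*N) (by positivity)
    linear_combination (-1) * hD + N^2 * hu2 + M^2 * hv2 + ((M^2+N^2)*y + 1) * hy'
  have h1 : (P*N - Q*M) * (M*x - P) = -(N*y) := by
    linear_combination M*huv - N*hu2 - N*y*hy'
  have hxM : (M^2+N^2)*(M*x) = P*M^2 + Q*M*N := by
    linear_combination ((M^2+N^2)*(P*N-Q*M))*h1 - ((M^2+N^2)*(M*x-P))*hD
      - (N*(P*N-Q*M))*hy'
  have hS0 : M^2+N^2 ≠ 0 := ne_of_gt hS
  have hxval : x = (P*M + Q*N) / (M^2 + N^2) := by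
    rw [eq_div_iff hS0]
    apply mul_left_cancel₀ hM0
    linear_combination hxM
  have hyval : y = 1 / (M^2 + N^2) := by
    rw [eq_div_iff hS0]
    linear_combination hy'
  rw [hxval, hyval]
end

section
/- For every integer n ≥ 1, the point of tangency of the Ford circles K[F(n−1), F(n)] and K[F(n), F(n+1)] is the point (F(2n)/F(2n+1), 1/F(2n+1)); that is, the point ((F(n−1)·F(n) + F(n)·F(n+1))/(F(n)² + F(n+1)²), 1/(F(n)² + F(n+1)²)) equals (F(2n)/F(2n+1), 1/F(2n+1)). -/
lemma fib_num (n : ℕ) (hn : 1 ≤ n) :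
    Nat.fib (n - 1) * Nat.fib n + Nat.fib n * Nat.fib (n + 1) = Nat.fib (2 * n) := by
  obtain ⟨m, rfl⟩ := Nat.exists_eq_add_of_le' hn
  simp only [Nat.add_sub_cancel]
  have h1 : 2 * (m + 1) = m + (m + 1) + 1 := by ring
  have h2 := Nat.fib_add m (m + 1)
  rw [h1, h2, Nat.fib_add_two]

/-- For every `n ≥ 1`, the point of tangency of the Ford circles
`K[F(n−1), F(n)]` and `K[F(n), F(n+1)]`, namely
`((F(n−1)·F(n) + F(n)·F(n+1))/(F(n)² + F(n+1)²), 1/(F(n)² + F(n+1)²))`,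
equals `(F(2n)/F(2n+1), 1/F(2n+1))`. -/
theorem ford_fibonacci_tangency_point (n : ℕ) (hn : 1 ≤ n) :
    ((((Nat.fib (n - 1) : ℝ) * Nat.fib n + (Nat.fib n : ℝ) * Nat.fib (n + 1)) /
        ((Nat.fib n : ℝ) ^ 2 + (Nat.fib (n + 1) : ℝ) ^ 2),
      1 / ((Nat.fib n : ℝ) ^ 2 + (Nat.fib (n + 1) : ℝ) ^ 2)) : ℝ × ℝ)
      = ((Nat.fib (2 * n) : ℝ) / (Nat.fib (2 * n + 1) : ℝ),
         1 / (Nat.fib (2 * n + 1) : ℝ)) := by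
  have hd : ((Nat.fib n : ℝ) ^ 2 + (Nat.fib (n + 1) : ℝ) ^ 2) = (Nat.fib (2 * n + 1) : ℝ) := by
    rw [Nat.fib_two_mul_add_one]
    push_cast
    ring
  have hnum := fib_num n hn
  rw [hd]
  congr 1
  rw [← hnum]
  push_cast
  ring
end

section
/- For every natural number n, the point (F(2n)/F(2n+1), 1/F(2n+1)) lies on the circle in ℝ² centered at (−1/2, 0) with radius √5/2; that is, (F(2n)/F(2n+1) + 1/2)² + (1/F(2n+1))² = 5/4 (all quantities taken as real numbers). -/
lemma cassini (n : ℕ) : (Nat.fib (n+1) : ℤ)^2 - Nat.fib n * Nat.fib (n+2) = (-1)^n := by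
  induction n with
  | zero => simp
  | succ k ih =>
    have h : (Nat.fib (k+3) : ℤ) = Nat.fib (k+1) + Nat.fib (k+2) := by
      have := Nat.fib_add_two (n := k+1); push_cast [this]; ring
    have h2 : (Nat.fib (k+2) : ℤ) = Nat.fib k + Nat.fib (k+1) := by
      have := Nat.fib_add_two (n := k); push_cast [this]; ring
    rw [h2] at ih
    rw [h, h2, pow_succ]
    linear_combination -ih

/-- For every natural number `n`, the point `(F(2n)/F(2n+1), 1/F(2n+1))` lies on the
circle centered at `(−1/2, 0)` with radius `√5/2`:
`(F(2n)/F(2n+1) + 1/2)² + (1/F(2n+1))² = 5/4`. -/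
theorem fibonacci_points_concyclic_A (n : ℕ) :
    ((Nat.fib (2 * n) : ℝ) / (Nat.fib (2 * n + 1) : ℝ) + 1 / 2) ^ 2
        + (1 / (Nat.fib (2 * n + 1) : ℝ)) ^ 2 = 5 / 4 := by
  have hc := cassini (2 * n)
  rw [pow_mul] at hc
  norm_num at hc
  have h2 : (Nat.fib (2*n+2) : ℤ) = Nat.fib (2*n) + Nat.fib (2*n+1) := by
    have := Nat.fib_add_two (n := 2*n); push_cast [this]; ring
  rw [h2] at hc
  have key : (Nat.fib (2*n+1) : ℝ)^2 = (Nat.fib (2*n))^2 + Nat.fib (2*n) * Nat.fib (2*n+1) + 1 := by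
    have : (Nat.fib (2*n+1) : ℤ)^2 = (Nat.fib (2*n))^2 + Nat.fib (2*n) * Nat.fib (2*n+1) + 1 := by
      linarith [hc]
    exact_mod_cast congrArg (Int.cast : ℤ → ℝ) this
  have hb : (Nat.fib (2*n+1) : ℝ) ≠ 0 := by
    have : 0 < Nat.fib (2*n+1) := Nat.fib_pos.mpr (by omega)
    positivity
  field_simp
  nlinarith [key]
end

section
/- For every natural number n, the point (F(2n+3)/F(2n+1), 1/F(2n+1)) lies on the circle in ℝ² centered at (3/2, 0) with radius √5/2; that is, (F(2n+3)/F(2n+1) − 3/2)² + (1/F(2n+1))² = 5/4. -/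
lemma fib_key : ∀ n : ℕ, ((Nat.fib (2*n+3) : ℤ))^2 - 3*(Nat.fib (2*n+3))*(Nat.fib (2*n+1)) + (Nat.fib (2*n+1))^2 = -1 := by
  intro n
  induction n with
  | zero => norm_num [Nat.fib]
  | succ k ih =>
      have h5 : (Nat.fib (2*(k+1)+3) : ℤ) = 3 * Nat.fib (2*k+3) - Nat.fib (2*k+1) := by
        have : 2*(k+1)+3 = (2*k+3) + 2 := by ring
        rw [this, Nat.fib_add_two, Nat.fib_add_one (by omega)]
        push_cast [Nat.fib_add_two]
        ring_nf
      have h1 : 2*(k+1)+1 = 2*k+3 := by ring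
      rw [h5, h1]
      nlinarith [ih]

/-- For every natural number `n`, the point `(F(2n+3)/F(2n+1), 1/F(2n+1))` lies on the
circle centered at `(3/2, 0)` with radius `√5/2`:
`(F(2n+3)/F(2n+1) − 3/2)² + (1/F(2n+1))² = 5/4`. -/
theorem fibonacci_points_concyclic_C (n : ℕ) :
    ((Nat.fib (2 * n + 3) : ℝ) / (Nat.fib (2 * n + 1) : ℝ) - 3 / 2) ^ 2
        + (1 / (Nat.fib (2 * n + 1) : ℝ)) ^ 2 = 5 / 4 := by
  have hpos : 0 < Nat.fib (2*n+1) := Nat.fib_pos.mpr (by omega)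
  have hb : (Nat.fib (2*n+1) : ℝ) ≠ 0 := by positivity
  have key := fib_key n
  have keyR : ((Nat.fib (2*n+3) : ℝ))^2 - 3*(Nat.fib (2*n+3))*(Nat.fib (2*n+1)) + (Nat.fib (2*n+1))^2 = -1 := by
    exact_mod_cast key
  field_simp
  nlinarith [keyR]
end

section
/- For every integer n ≥ 1, the point (−F(2n−1)/F(2n+1), 1/F(2n+1)) lies on the circle in ℝ² centered at (−3/2, 0) with radius √5/2; that is, (−F(2n−1)/F(2n+1) + 3/2)² + (1/F(2n+1))² = 5/4. -/
lemma cassini_even (m : ℕ) :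
    (Nat.fib (2*m+1) : ℤ) * Nat.fib (2*m+3) = (Nat.fib (2*m+2) : ℤ)^2 + 1 := by
  induction m with
  | zero => norm_num
  | succ k ih =>
    have h1 : Nat.fib (2*(k+1)+1) = Nat.fib (2*k+1) + Nat.fib (2*k+2) := by
      rw [show 2*(k+1)+1 = (2*k+1)+2 by ring]; rw [Nat.fib_add_two]
    have h2 : Nat.fib (2*(k+1)+2) = Nat.fib (2*k+2) + Nat.fib (2*(k+1)+1) := by
      rw [show 2*(k+1)+2 = (2*k+2)+2 by ring, show 2*(k+1)+1 = (2*k+2)+1 by ring, Nat.fib_add_two]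
    have h3 : Nat.fib (2*(k+1)+3) = Nat.fib (2*(k+1)+1) + Nat.fib (2*(k+1)+2) := by
      rw [show 2*(k+1)+3 = (2*(k+1)+1)+2 by ring, Nat.fib_add_two]
    have h4 : Nat.fib (2*k+3) = Nat.fib (2*k+1) + Nat.fib (2*k+2) := by
      rw [show 2*k+3 = (2*k+1)+2 by ring, Nat.fib_add_two]
    push_cast [h1, h2, h3, h4] at *
    nlinarith [ih]

/-- For every `n ≥ 1`, the point `(−F(2n−1)/F(2n+1), 1/F(2n+1))` lies on the circle
centered at `(−3/2, 0)` with radius `√5/2`: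
`(−F(2n−1)/F(2n+1) + 3/2)² + (1/F(2n+1))² = 5/4`. -/
theorem fibonacci_points_concyclic_D (n : ℕ) (hn : 1 ≤ n) :
    (-(Nat.fib (2 * n - 1) : ℝ) / (Nat.fib (2 * n + 1) : ℝ) + 3 / 2) ^ 2
        + (1 / (Nat.fib (2 * n + 1) : ℝ)) ^ 2 = 5 / 4 := by
  obtain ⟨m, rfl⟩ := Nat.exists_eq_add_of_le hn
  have e1 : 2 * (1 + m) - 1 = 2*m+1 := by omega
  have e2 : 2 * (1 + m) + 1 = 2*m+3 := by omega
  rw [e1, e2]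
  have hc := cassini_even m
  have hpos : (0:ℝ) < Nat.fib (2*m+3) := by
    have : 0 < Nat.fib (2*m+3) := Nat.fib_pos.mpr (by omega)
    exact_mod_cast this
  have hb : Nat.fib (2*m+3) = Nat.fib (2*m+1) + Nat.fib (2*m+2) := by
    rw [show 2*m+3 = (2*m+1)+2 by ring, Nat.fib_add_two]
  have hcR : (Nat.fib (2*m+1) : ℝ) * Nat.fib (2*m+3) = (Nat.fib (2*m+2) : ℝ)^2 + 1 := by
    exact_mod_cast hc
  have hbR : (Nat.fib (2*m+3) : ℝ) = Nat.fib (2*m+1) + Nat.fib (2*m+2) := by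
    exact_mod_cast hb
  set a : ℝ := (Nat.fib (2*m+1) : ℝ) with ha
  set b : ℝ := (Nat.fib (2*m+2) : ℝ)
  set c : ℝ := (Nat.fib (2*m+3) : ℝ)
  field_simp
  linear_combination (16*(c - a + b)) * hbR - 16 * hcR
end
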